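/- For every m ∈ ℕ, the set of all two-colored partitions p such that (i) every block has at most two legs, (ii) the total color sum Σ(p) ∈ 2mℤ, and (iii) for any two distinct legs α ≠ β of the same block, δ_p(α,β) ∈ m + 2mℤ if α and β have the same normalized color and δ_p(α,β) ∈ 2mℤ if they have different normalized colors, is a category of two-colored partitions. -/

import Mathlib

noncomputable section
attribute [local instance] Classical.propDecidable

/-- A two-colored partition: two rows of points colored white (`true`) or black (`false`),
together with a set partition (setoid) of all points into blocks. -/
structure TCP where
  upper : ℕ
  lower : ℕ
  upColor : Fin upper → Bool
  loColor : Fin lower → Bool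
  rel : Setoid (Fin upper ⊕ Fin lower)

namespace TCP

/-- The points of a partition. -/
abbrev Point (p : TCP) := Fin p.upper ⊕ Fin p.lower

/-- Native color of a point. -/
def color (p : TCP) : p.Point → Bool
  | .inl j => p.upColor j
  | .inr i => p.loColor i

/-- Normalized color: inverted on the upper row. -/
def ncolor (p : TCP) : p.Point → Bool
  | .inl j => !(p.upColor j)
  | .inr i => p.loColor i

/-- Sign of a point: `+1` for normalized white, `-1` for normalized black. -/
def sgn (p : TCP) (x : p.Point) : ℤ := if p.ncolor x then 1 else -1

/-- Color sum of a finite set of points. -/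
def csum (p : TCP) (S : Finset p.Point) : ℤ := ∑ x ∈ S, p.sgn x

/-- Total color sum Σ(p). -/
def tsum (p : TCP) : ℤ := p.csum Finset.univ

/-- Total number of points. -/
def size (p : TCP) : ℕ := p.upper + p.lower

/-- Position in the counter-clockwise cyclic order: lower points left to right,
then upper points right to left. -/
def pos (p : TCP) : p.Point → ℕ
  | .inr i => i
  | .inl j => p.lower + (p.upper - 1 - j)

/-- Cyclic position of `y` relative to `x`. -/
def relpos (p : TCP) (x y : p.Point) : ℕ := (p.size + p.pos y - p.pos x) % p.size

/-- Half-open cyclic interval `]x,y]`. -/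
def Ioc (p : TCP) (x y : p.Point) : Finset p.Point :=
  Finset.univ.filter (fun z => 0 < p.relpos x z ∧ p.relpos x z ≤ p.relpos x y)

/-- Open cyclic interval `]x,y[`. -/
def Ioo (p : TCP) (x y : p.Point) : Finset p.Point :=
  Finset.univ.filter (fun z => 0 < p.relpos x z ∧ p.relpos x z < p.relpos x y)

/-- The color distance between two points. -/
def cdist (p : TCP) (x y : p.Point) : ℤ :=
  if x = y then p.tsum
  else if p.ncolor x = p.ncolor y then p.csum (p.Ioc x y)
  else p.csum (p.Ioo x y)

/-- The block of a point. -/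
def blockOf (p : TCP) (x : p.Point) : Finset p.Point :=
  Finset.univ.filter (fun y => p.rel.r x y)

/-- A finite set of points is a block of `p`. -/
def IsBlock (p : TCP) (B : Finset p.Point) : Prop := ∃ x, B = p.blockOf x

/-- `(a,b,c,d)` is ordered in the cyclic order of `p`. -/
def Ordered4 (p : TCP) (a b c d : p.Point) : Prop :=
  0 < p.relpos a b ∧ p.relpos a b < p.relpos a c ∧ p.relpos a c < p.relpos a d

/-- Two sets of points cross each other. -/
def Cross (p : TCP) (B₁ B₂ : Finset p.Point) : Prop :=
  ∃ a ∈ B₁, ∃ b ∈ B₁, ∃ a' ∈ B₂, ∃ b' ∈ B₂, p.Ordered4 a a' b b'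

/-! ### The analyzer -/

/-- Set of block sizes. -/
def Fset (S : Set TCP) : Set ℕ :=
  {n | ∃ p ∈ S, ∃ B : Finset p.Point, p.IsBlock B ∧ B.card = n}

/-- Set of block color sums. -/
def Vset (S : Set TCP) : Set ℤ :=
  {v | ∃ p ∈ S, ∃ B : Finset p.Point, p.IsBlock B ∧ p.csum B = v}

/-- Set of total color sums. -/
def Sset (S : Set TCP) : Set ℤ := {s | ∃ p ∈ S, p.tsum = s}

/-- Set of color distances between cyclically subsequent legs of the same block
having the same normalized color. -/
def Lset (S : Set TCP) : Set ℤ :=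
  {d | ∃ p ∈ S, ∃ B : Finset p.Point, p.IsBlock B ∧ ∃ a ∈ B, ∃ b ∈ B, a ≠ b ∧
        p.Ioo a b ∩ B = ∅ ∧ p.ncolor a = p.ncolor b ∧ p.cdist a b = d}

/-- Set of color distances between cyclically subsequent legs of the same block
having different normalized colors. -/
def Kset (S : Set TCP) : Set ℤ :=
  {d | ∃ p ∈ S, ∃ B : Finset p.Point, p.IsBlock B ∧ ∃ a ∈ B, ∃ b ∈ B, a ≠ b ∧
        p.Ioo a b ∩ B = ∅ ∧ p.ncolor a ≠ p.ncolor b ∧ p.cdist a b = d}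

/-- Set of color distances between legs of two crossing blocks. -/
def Xset (S : Set TCP) : Set ℤ :=
  {d | ∃ p ∈ S, ∃ B₁ B₂ : Finset p.Point, p.IsBlock B₁ ∧ p.IsBlock B₂ ∧ B₁ ≠ B₂ ∧
        p.Cross B₁ B₂ ∧ ∃ a ∈ B₁, ∃ b ∈ B₂, p.cdist a b = d}

/-- The parameter domain. -/
abbrev Param := Set ℕ × Set ℤ × Set ℤ × Set ℤ × Set ℤ × Set ℤ

/-- The analyzer `Z = (F, V, Σ, L, K, X)`. -/
def Z (S : Set TCP) : Param := (Fset S, Vset S, Sset S, Lset S, Kset S, Xset S)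

/-! ### Operations on partitions -/

/-- Componentwise relation on a sum type. -/
def sumRel {α β : Type*} (s : α → α → Prop) (t : β → β → Prop) : α ⊕ β → α ⊕ β → Prop
  | .inl a, .inl b => s a b
  | .inr a, .inr b => t a b
  | _, _ => False

/-- Componentwise setoid on a sum type. -/
def sumSetoid {α β : Type*} (s : Setoid α) (t : Setoid β) : Setoid (α ⊕ β) where
  r := sumRel s.r t.r
  iseqv := by
    refine ⟨?_, ?_, ?_⟩
    · rintro (a | a) <;> exact Setoid.refl _
    · rintro (a | a) (b | b) h <;> first | exact Setoid.symm h | exact h.elim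
    · rintro (a | a) (b | b) (c | c) h₁ h₂ <;>
        first | exact Setoid.trans h₁ h₂ | exact h₁.elim | exact h₂.elim

/-- Identification of the points of a tensor product with a sum of points. -/
def ptmap (p q : TCP) :
    (Fin (p.upper + q.upper) ⊕ Fin (p.lower + q.lower)) → (p.Point ⊕ q.Point)
  | .inl j => (finSumFinEquiv.symm j).elim (fun a => .inl (.inl a)) (fun a => .inr (.inl a))
  | .inr i => (finSumFinEquiv.symm i).elim (fun a => .inl (.inr a)) (fun a => .inr (.inr a))

/-- Tensor product: horizontal concatenation. -/
def tensor (p q : TCP) : TCP where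
  upper := p.upper + q.upper
  lower := p.lower + q.lower
  upColor := fun j => (finSumFinEquiv.symm j).elim p.upColor q.upColor
  loColor := fun i => (finSumFinEquiv.symm i).elim p.loColor q.loColor
  rel := Setoid.comap (ptmap p q) (sumSetoid p.rel q.rel)

/-- Embedding of the points of `p` into the points of `p.tensor q`. -/
def tinl (p q : TCP) : p.Point → (p.tensor q).Point
  | .inl j => Sum.inl (Fin.castAdd q.upper j)
  | .inr i => Sum.inr (Fin.castAdd q.lower i)

/-- Embedding of the points of `q` into the points of `p.tensor q`. -/
def tinr (p q : TCP) : q.Point → (p.tensor q).Point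
  | .inl j => Sum.inl (Fin.natAdd p.upper j)
  | .inr i => Sum.inr (Fin.natAdd p.lower i)

/-- Involution: swapping the rows. -/
def invol (p : TCP) : TCP where
  upper := p.lower
  lower := p.upper
  upColor := p.loColor
  loColor := p.upColor
  rel := Setoid.comap Sum.swap p.rel

/-- `(p, q)` is composable: the upper row of `p` matches the lower row of `q`. -/
structure Composable (p q : TCP) : Prop where
  len : p.upper = q.lower
  col : ∀ j : Fin p.upper, p.upColor j = q.loColor (Fin.cast len j)

/-- Generating relation for the composition of `p` and `q`. -/
def compRel (p q : TCP) (h : p.upper = q.lower) :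
    (q.Point ⊕ p.Point) → (q.Point ⊕ p.Point) → Prop := fun x y =>
  (∃ a b, x = .inl a ∧ y = .inl b ∧ q.rel.r a b) ∨
  (∃ a b, x = .inr a ∧ y = .inr b ∧ p.rel.r a b) ∨
  (∃ j : Fin p.upper, x = .inl (.inr (Fin.cast h j)) ∧ y = .inr (.inl j)) ∨
  (∃ j : Fin p.upper, y = .inl (.inr (Fin.cast h j)) ∧ x = .inr (.inl j))

/-- Composition: vertical concatenation, with blocks joined along the middle row. -/
def comp (p q : TCP) (h : Composable p q) : TCP where
  upper := q.upper
  lower := p.lower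
  upColor := q.upColor
  loColor := p.loColor
  rel := Setoid.comap
    (fun x : Fin q.upper ⊕ Fin p.lower => match x with
      | .inl j => Sum.inl (Sum.inl j : q.Point)
      | .inr i => Sum.inr (Sum.inr i : p.Point))
    (Relation.EqvGen.setoid (compRel p q h.len))

/-- The empty partition. -/
def emptyP : TCP := ⟨0, 0, Fin.elim0, Fin.elim0, ⊤⟩

/-- The identity partition of color `c`: one upper and one lower point of color `c`
joined in one block. -/
def idPart (c : Bool) : TCP := ⟨1, 1, fun _ => c, fun _ => c, ⊤⟩

/-- The one-row pair partition with two lower points of colors `c₁`, `c₂` in one block. -/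
def lpair (c₁ c₂ : Bool) : TCP := ⟨0, 2, Fin.elim0, fun i => if i = 0 then c₁ else c₂, ⊤⟩

/-- A category of two-colored partitions. -/
def IsCategory (C : Set TCP) : Prop :=
  emptyP ∈ C ∧ idPart true ∈ C ∧ idPart false ∈ C ∧
  lpair true false ∈ C ∧ lpair false true ∈ C ∧
  (∀ p q, p ∈ C → q ∈ C → p.tensor q ∈ C) ∧
  (∀ p, p ∈ C → p.invol ∈ C) ∧
  (∀ p q (h : Composable p q), p ∈ C → q ∈ C → comp p q h ∈ C)

/-! ### Rotations, verticolor reflection, erasing -/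

/-- Rotate the leftmost upper point down (identity if the upper row is empty). -/
def rotDownL (p : TCP) : TCP :=
  if h : 0 < p.upper then
    { upper := p.upper - 1
      lower := p.lower + 1
      upColor := fun j => p.upColor ⟨j + 1, by have := j.isLt; omega⟩
      loColor := fun i => Fin.cases (!(p.upColor ⟨0, h⟩)) (fun i' => p.loColor i') i
      rel := Setoid.comap
        (fun x : Fin (p.upper - 1) ⊕ Fin (p.lower + 1) => match x with
          | .inl j => (Sum.inl ⟨j + 1, by have := j.isLt; omega⟩ : p.Point)
          | .inr i => Fin.cases (Sum.inl ⟨0, h⟩ : p.Point) (fun i' => (Sum.inr i' : p.Point)) i)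
        p.rel }
  else p

/-- Rotate the rightmost upper point down (identity if the upper row is empty). -/
def rotDownR (p : TCP) : TCP :=
  if h : 0 < p.upper then
    { upper := p.upper - 1
      lower := p.lower + 1
      upColor := fun j => p.upColor ⟨j, by have := j.isLt; omega⟩
      loColor := fun i =>
        Fin.lastCases (!(p.upColor ⟨p.upper - 1, by omega⟩)) (fun i' => p.loColor i') i
      rel := Setoid.comap
        (fun x : Fin (p.upper - 1) ⊕ Fin (p.lower + 1) => match x with
          | .inl j => (Sum.inl ⟨j, by have := j.isLt; omega⟩ : p.Point)
          | .inr i => Fin.lastCases (Sum.inl ⟨p.upper - 1, by omega⟩ : p.Point)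
              (fun i' => (Sum.inr i' : p.Point)) i)
        p.rel }
  else p

/-- Rotate the leftmost lower point up (identity if the lower row is empty). -/
def rotUpL (p : TCP) : TCP :=
  if h : 0 < p.lower then
    { upper := p.upper + 1
      lower := p.lower - 1
      upColor := fun j => Fin.cases (!(p.loColor ⟨0, h⟩)) (fun j' => p.upColor j') j
      loColor := fun i => p.loColor ⟨i + 1, by have := i.isLt; omega⟩
      rel := Setoid.comap
        (fun x : Fin (p.upper + 1) ⊕ Fin (p.lower - 1) => match x with
          | .inl j => Fin.cases (Sum.inr ⟨0, h⟩ : p.Point) (fun j' => (Sum.inl j' : p.Point)) j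
          | .inr i => (Sum.inr ⟨i + 1, by have := i.isLt; omega⟩ : p.Point))
        p.rel }
  else p

/-- Rotate the rightmost lower point up (identity if the lower row is empty). -/
def rotUpR (p : TCP) : TCP :=
  if h : 0 < p.lower then
    { upper := p.upper + 1
      lower := p.lower - 1
      upColor := fun j =>
        Fin.lastCases (!(p.loColor ⟨p.lower - 1, by omega⟩)) (fun j' => p.upColor j') j
      loColor := fun i => p.loColor ⟨i, by have := i.isLt; omega⟩
      rel := Setoid.comap
        (fun x : Fin (p.upper + 1) ⊕ Fin (p.lower - 1) => match x with
          | .inl j => Fin.lastCases (Sum.inr ⟨p.lower - 1, by omega⟩ : p.Point)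
              (fun j' => (Sum.inl j' : p.Point)) j
          | .inr i => (Sum.inr ⟨i, by have := i.isLt; omega⟩ : p.Point))
        p.rel }
  else p

/-- Verticolor reflection: reverse both rows and invert all colors. -/
def vreflect (p : TCP) : TCP where
  upper := p.upper
  lower := p.lower
  upColor := fun j => !(p.upColor j.rev)
  loColor := fun i => !(p.loColor i.rev)
  rel := Setoid.comap (Sum.map Fin.rev Fin.rev) p.rel

/-- `{a, b}` is a turn: two cyclically consecutive points of inverse normalized colors. -/
def IsTurn (p : TCP) (a b : p.Point) : Prop :=
  p.relpos a b = 1 ∧ p.ncolor a ≠ p.ncolor b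

/-- `e` identifies the points of `q` with the points of `p` outside `{a, b}`, preserving
rows, colors and order, and `q` carries the block structure obtained from `p` by erasing
`{a, b}` and merging all blocks meeting `{a, b}`. -/
def IsErasingMap (p : TCP) (a b : p.Point) (q : TCP) (e : q.Point → p.Point) : Prop :=
  Function.Injective e ∧
  Set.range e = {x | x ≠ a ∧ x ≠ b} ∧
  (∀ j : Fin q.upper, ∃ j', e (.inl j) = Sum.inl j') ∧
  (∀ i : Fin q.lower, ∃ i', e (.inr i) = Sum.inr i') ∧
  (∀ j₁ j₂ : Fin q.upper, ∀ j₁' j₂' : Fin p.upper,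
    e (.inl j₁) = Sum.inl j₁' → e (.inl j₂) = Sum.inl j₂' → (j₁ < j₂ ↔ j₁' < j₂')) ∧
  (∀ i₁ i₂ : Fin q.lower, ∀ i₁' i₂' : Fin p.lower,
    e (.inr i₁) = Sum.inr i₁' → e (.inr i₂) = Sum.inr i₂' → (i₁ < i₂ ↔ i₁' < i₂')) ∧
  (∀ x, q.color x = p.color (e x)) ∧
  (∀ x y, q.rel.r x y ↔
    (p.rel.r (e x) (e y) ∨
      ((p.rel.r (e x) a ∨ p.rel.r (e x) b) ∧ (p.rel.r (e y) a ∨ p.rel.r (e y) b))))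

/-- `q` is obtained from `p` by erasing the turn `{a, b}`. -/
def IsErasing (p : TCP) (a b : p.Point) (q : TCP) : Prop :=
  p.IsTurn a b ∧ ∃ e : q.Point → p.Point, IsErasingMap p a b q e

end TCP

/-!
Give every point `x` of a two-colored partition the potential `φ(x) ∈ ℤ/2mℤ`: the color sum of
the points before `x` in the cyclic order, plus `0` or `m - 1` according to the normalized color
of `x`. When `Σ(p) ∈ 2mℤ`, the color distance `δ_p(x, y)` is `φ(y) - φ(x)`, corrected by `m` when
`x` and `y` have different normalized colors, so condition (iii) says that the two legs of a
block have antipodal potentials, `φ(y) = φ(x) + m`; for `m > 0` this already forces every block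
to have at most two legs.

A tensor product shifts the potentials of each factor by a constant, and the involution, which
reverses the cyclic order and flips normalized colors, shifts them by `m - Σ(p)`. In a
composition, the two copies of a middle point (one in `p`, one in `q`) have antipodal potentials
for the same reason. A block of the composition is traced by a path that alternates between
blocks of `p` or `q` and middle identifications and that starts and ends with a block edge; it
has odd length, so its two ends again have antipodal potentials.
-/

namespace ZMod

variable {m : ℕ}

theorem natCast_add_self_eq_zero : (m : ZMod (2 * m)) + m = 0 := by
  rw [← Nat.cast_add, ← two_mul, natCast_self]

theorem eq_add_of_eq_add_natCast {a b : ZMod (2 * m)} (h : a = b + m) : b = a + m := by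
  linear_combination -h - natCast_add_self_eq_zero

theorem natCast_ne_zero_of_pos (hm : 0 < m) : (m : ZMod (2 * m)) ≠ 0 := by
  rw [Ne, natCast_eq_zero_iff]
  exact fun h => by have := Nat.le_of_dvd hm h; omega

theorem two_mul_dvd_iff_intCast_eq_zero (a : ℤ) :
    (2 * m : ℤ) ∣ a ↔ (a : ZMod (2 * m)) = 0 := by
  rw [intCast_zmod_eq_zero_iff_dvd]
  push_cast
  rfl

end ZMod

namespace Relation

variable {V : Type*} (E₁ E₂ : V → V → Prop)

/-- Walks alternating between `E₁`- and `E₂`-edges; the flag is `true` when the next edge has to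
be an `E₁`-edge. -/
inductive AltStep : V × Bool → V × Bool → Prop
  | fst {v w : V} : E₁ v w → AltStep (v, true) (w, false)
  | snd {v w : V} : E₂ v w → AltStep (v, false) (w, true)

variable {E₁ E₂} {x : V}

theorem AltStep.exists_pred {v : V} {b : Bool}
    (h : ReflTransGen (AltStep E₁ E₂) (x, true) (v, b)) :
    (v = x ∧ b = true) ∨
      ∃ w, ReflTransGen (AltStep E₁ E₂) (x, true) (w, !b) ∧ if b then E₂ w v else E₁ w v := by
  rcases (ReflTransGen.cases_tail_iff _ _ _).1 h with h | ⟨s, hs, hstep⟩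
  · exact .inl (Prod.mk.inj h)
  · right
    cases hstep with
    | fst he => exact ⟨_, hs, he⟩
    | snd he => exact ⟨_, hs, he⟩

/-- An edge of the wrong type leads back along the previous step, since both relations are
partial matchings. -/
theorem AltStep.exists_of_reflTransGen [Std.Symm E₁] [Std.Symm E₂]
    (hf₁ : Relator.RightUnique E₁) (hf₂ : Relator.RightUnique E₂) (hx : ∀ w, ¬E₂ x w) {y : V}
    (hxy : ReflTransGen (fun v w => E₁ v w ∨ E₂ v w) x y) :
    ∃ b, ReflTransGen (AltStep E₁ E₂) (x, true) (y, b) := by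
  induction hxy with
  | refl => exact ⟨true, .refl⟩
  | @tail v u _ hvu ih =>
    obtain ⟨b, hb⟩ := ih
    rcases b, hvu with ⟨_ | _, he | he⟩
    · obtain ⟨⟨-, ⟨⟩⟩⟩ | ⟨w, hw, hwv⟩ := AltStep.exists_pred hb
      exact ⟨true, hf₁ he (Std.Symm.symm _ _ hwv) ▸ hw⟩
    · exact ⟨true, hb.tail (.snd he)⟩
    · exact ⟨false, hb.tail (.fst he)⟩
    · obtain ⟨rfl, -⟩ | ⟨w, hw, hwv⟩ := AltStep.exists_pred hb
      · exact (hx u he).elim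
      · exact ⟨false, hf₂ he (Std.Symm.symm _ _ hwv) ▸ hw⟩

theorem AltStep.apply_eq_add_cond {A : Type*} [AddGroup A] {Φ : V → A} {c : A} (hc : c + c = 0)
    (hΦ : ∀ v w, E₁ v w ∨ E₂ v w → Φ w = Φ v + c) {y : V} {b : Bool}
    (h : ReflTransGen (AltStep E₁ E₂) (x, true) (y, b)) : Φ y = Φ x + cond b 0 c := by
  generalize hs : (y, b) = s at h
  induction h generalizing y b with
  | refl =>
    cases hs
    simp
  | tail _ hstep ih =>
    cases hs
    cases hstep with
    | fst he =>
      rw [hΦ _ _ (.inl he), ih rfl]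
      simp
    | snd he =>
      rw [hΦ _ _ (.inr he), ih rfl]
      simp [add_assoc, hc]

theorem apply_eq_add_of_reflTransGen_or {A : Type*} [AddGroup A] {Φ : V → A} {c : A}
    [Std.Symm E₁] [Std.Symm E₂] (hf₁ : Relator.RightUnique E₁) (hf₂ : Relator.RightUnique E₂)
    (hc : c + c = 0) (hΦ : ∀ v w, E₁ v w ∨ E₂ v w → Φ w = Φ v + c)
    (hx : ∀ w, ¬E₂ x w) {y : V} (hy : ∀ w, ¬E₂ y w) (hne : x ≠ y)
    (hxy : ReflTransGen (fun v w => E₁ v w ∨ E₂ v w) x y) : Φ y = Φ x + c := by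
  obtain ⟨b, hb⟩ := AltStep.exists_of_reflTransGen hf₁ hf₂ hx hxy
  cases b
  · exact AltStep.apply_eq_add_cond hc hΦ hb
  · obtain ⟨rfl, -⟩ | ⟨w, -, hwy⟩ := AltStep.exists_pred hb
    · exact (hne rfl).elim
    · exact (hy w (Std.Symm.symm _ _ hwy)).elim

end Relation

open Finset Relation

namespace TCP

section Potential

variable (p : TCP)

theorem pos_lt_size (x : p.Point) : p.pos x < p.size := by
  rcases x with j | i <;> simp only [pos, size] <;> omega

theorem pos_injective : Function.Injective p.pos := by
  rintro (j | i) (j' | i') h <;>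
    simp only [pos, Sum.inl.injEq, Sum.inr.injEq, reduceCtorEq] at h ⊢ <;> omega

theorem relpos_eq_ite (x y : p.Point) :
    p.relpos x y =
      if p.pos x ≤ p.pos y then p.pos y - p.pos x else p.size + p.pos y - p.pos x := by
  have hx := p.pos_lt_size x
  have hy := p.pos_lt_size y
  unfold relpos
  split_ifs
  · rw [show p.size + p.pos y - p.pos x = p.pos y - p.pos x + p.size by omega,
      Nat.add_mod_right, Nat.mod_eq_of_lt (by omega)]
  · exact Nat.mod_eq_of_lt (by omega)

theorem tsum_eq_sum : p.tsum = ∑ z, p.sgn z := rfl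

def sumBefore (x : p.Point) : ℤ := ∑ z, if p.pos z < p.pos x then p.sgn z else 0

def sumAfter (x : p.Point) : ℤ := ∑ z, if p.pos x < p.pos z then p.sgn z else 0

theorem sumBefore_add_sgn (x : p.Point) :
    p.sumBefore x + p.sgn x = ∑ z, if p.pos z ≤ p.pos x then p.sgn z else 0 := by
  have hsgn : p.sgn x = ∑ z, if p.pos z = p.pos x then p.sgn z else 0 := by
    simp [p.pos_injective.eq_iff]
  rw [sumBefore, hsgn, ← sum_add_distrib]
  refine sum_congr rfl fun z _ => ?_
  split_ifs <;> omega

theorem sumBefore_add_sgn_add_sumAfter (x : p.Point) :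
    p.sumBefore x + p.sgn x + p.sumAfter x = p.tsum := by
  rw [sumBefore_add_sgn, sumAfter, tsum_eq_sum, ← sum_add_distrib]
  refine sum_congr rfl fun z _ => ?_
  split_ifs <;> omega

theorem csum_Ioc (x y : p.Point) :
    p.csum (p.Ioc x y) = p.sumBefore y + p.sgn y - (p.sumBefore x + p.sgn x) +
      if p.pos y < p.pos x then p.tsum else 0 := by
  have hx := p.pos_lt_size x
  have hy := p.pos_lt_size y
  rw [sumBefore_add_sgn, sumBefore_add_sgn, csum, Ioc, sum_filter, tsum_eq_sum, ite_sum_zero,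
    ← sum_sub_distrib, ← sum_add_distrib]
  refine sum_congr rfl fun z _ => ?_
  have hz := p.pos_lt_size z
  rw [relpos_eq_ite, relpos_eq_ite]
  split_ifs <;> omega

theorem csum_Ioo {x y : p.Point} (hxy : x ≠ y) :
    p.csum (p.Ioo x y) = p.sumBefore y - (p.sumBefore x + p.sgn x) +
      if p.pos y < p.pos x then p.tsum else 0 := by
  have hx := p.pos_lt_size x
  have hy := p.pos_lt_size y
  have hne : p.pos x ≠ p.pos y := p.pos_injective.ne hxy
  rw [sumBefore_add_sgn, sumBefore, csum, Ioo, sum_filter, tsum_eq_sum, ite_sum_zero,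
    ← sum_sub_distrib, ← sum_add_distrib]
  refine sum_congr rfl fun z _ => ?_
  have hz := p.pos_lt_size z
  rw [relpos_eq_ite, relpos_eq_ite]
  split_ifs <;> omega

end Potential

/-- The offset `m - 1` of normalized black points is what turns both clauses of condition (iii)
into the single equation `potential m p y = potential m p x + m`. -/
def colorOffset (m : ℕ) (c : Bool) : ZMod (2 * m) := if c then 0 else m - 1

theorem colorOffset_not_ncolor (m : ℕ) (p : TCP) (x : p.Point) :
    colorOffset m (!p.ncolor x) = colorOffset m (p.ncolor x) + m - p.sgn x := by
  rw [sgn]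
  cases p.ncolor x
  · simp only [colorOffset, Bool.not_false, if_true, Bool.false_eq_true, if_false]
    push_cast
    linear_combination -ZMod.natCast_add_self_eq_zero
  · simp only [colorOffset, Bool.not_true, Bool.false_eq_true, if_false, if_true]
    push_cast
    ring

def potential (m : ℕ) (p : TCP) (x : p.Point) : ZMod (2 * m) :=
  p.sumBefore x + colorOffset m (p.ncolor x)

theorem intCast_cdist {m : ℕ} {p : TCP} (ht : (p.tsum : ZMod (2 * m)) = 0) {x y : p.Point}
    (hxy : x ≠ y) :
    (p.cdist x y : ZMod (2 * m)) = potential m p y - potential m p x +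
      if p.ncolor x = p.ncolor y then 0 else (m : ZMod (2 * m)) := by
  rw [cdist, if_neg hxy, potential, potential]
  split_ifs with hc
  · rw [csum_Ioc]
    push_cast
    rw [ht, ite_self, ← hc, sgn, sgn, hc]
    ring
  · rw [csum_Ioo p hxy]
    push_cast
    rw [ht, ite_self, Bool.eq_not_of_ne (Ne.symm hc), colorOffset_not_ncolor]
    linear_combination -ZMod.natCast_add_self_eq_zero

theorem cdist_conditions_iff {m : ℕ} {p : TCP} (ht : (p.tsum : ZMod (2 * m)) = 0)
    {x y : p.Point} (hxy : x ≠ y) :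
    ((p.ncolor x = p.ncolor y → (2 * m : ℤ) ∣ (p.cdist x y - m)) ∧
        (p.ncolor x ≠ p.ncolor y → (2 * m : ℤ) ∣ p.cdist x y)) ↔
      potential m p y = potential m p x + m := by
  simp only [ZMod.two_mul_dvd_iff_intCast_eq_zero, Int.cast_sub, Int.cast_natCast,
    intCast_cdist ht hxy]
  by_cases hc : p.ncolor x = p.ncolor y
  · rw [if_pos hc, add_zero]
    refine ⟨fun h => ?_, fun h => ⟨fun _ => ?_, fun hc' => (hc' hc).elim⟩⟩
    · linear_combination h.1 hc
    · linear_combination h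
  · rw [if_neg hc]
    refine ⟨fun h => ?_, fun h => ⟨fun hc' => (hc hc').elim, fun _ => ?_⟩⟩
    · linear_combination h.2 hc - ZMod.natCast_add_self_eq_zero
    · linear_combination h + ZMod.natCast_add_self_eq_zero

def AntipodalBlocks (m : ℕ) (p : TCP) : Prop :=
  ∀ x y : p.Point, p.rel.r x y → x ≠ y → potential m p y = potential m p x + m

def antipodalSet (m : ℕ) : Set TCP :=
  {p | (p.tsum : ZMod (2 * m)) = 0 ∧ AntipodalBlocks m p}

theorem mem_blockOf {p : TCP} {x y : p.Point} : y ∈ p.blockOf x ↔ p.rel.r x y := by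
  simp [blockOf]

theorem forall_isBlock_iff {p : TCP} {P : p.Point → p.Point → Prop} :
    (∀ B, p.IsBlock B → ∀ a ∈ B, ∀ b ∈ B, P a b) ↔ ∀ a b, p.rel.r a b → P a b := by
  constructor
  · intro h a b hab
    exact h _ ⟨a, rfl⟩ a (mem_blockOf.2 (p.rel.refl a)) b (mem_blockOf.2 hab)
  · rintro h B ⟨x, rfl⟩ a ha b hb
    exact h a b (p.rel.trans (p.rel.symm (mem_blockOf.1 ha)) (mem_blockOf.1 hb))

namespace AntipodalBlocks

variable {m : ℕ} {p : TCP}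

theorem eq_of_rel (hm : 0 < m) (h : AntipodalBlocks m p) {x y z : p.Point}
    (hxy : p.rel.r x y) (hxz : p.rel.r x z) (hy : x ≠ y) (hz : x ≠ z) : y = z := by
  by_contra hyz
  have hyz' := h y z (p.rel.trans (p.rel.symm hxy) hxz) hyz
  rw [h x y hxy hy, h x z hxz hz] at hyz'
  exact ZMod.natCast_ne_zero_of_pos hm (by linear_combination -hyz')

theorem card_le_two (hm : 0 < m) (h : AntipodalBlocks m p) {B : Finset p.Point}
    (hB : p.IsBlock B) : B.card ≤ 2 := by
  obtain ⟨x, rfl⟩ := hB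
  by_contra! hcard
  obtain ⟨a, ha, b, hb, c, hc, hab, hac, hbc⟩ := two_lt_card.mp hcard
  rw [mem_blockOf] at ha hb hc
  have hxa := p.rel.symm ha
  exact hbc (h.eq_of_rel hm (p.rel.trans hxa hb) (p.rel.trans hxa hc) hab hac)

end AntipodalBlocks

theorem setOf_eq_antipodalSet {m : ℕ} (hm : 0 < m) :
    {p : TCP |
      (∀ B : Finset p.Point, p.IsBlock B → B.card ≤ 2) ∧
      ((2 * m : ℤ) ∣ p.tsum) ∧
      (∀ B : Finset p.Point, p.IsBlock B → ∀ a ∈ B, ∀ b ∈ B, a ≠ b →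
        ((p.ncolor a = p.ncolor b → (2 * m : ℤ) ∣ (p.cdist a b - m)) ∧
         (p.ncolor a ≠ p.ncolor b → (2 * m : ℤ) ∣ p.cdist a b)))} = antipodalSet m := by
  ext p
  simp only [Set.mem_ofPred_eq, antipodalSet, forall_isBlock_iff,
    ZMod.two_mul_dvd_iff_intCast_eq_zero p.tsum]
  constructor
  · rintro ⟨-, ht, hd⟩
    exact ⟨ht, fun x y hr hne => (cdist_conditions_iff ht hne).1 (hd x y hr hne)⟩
  · rintro ⟨ht, hs⟩
    exact ⟨fun B hB => hs.card_le_two hm hB, ht,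
      fun x y hr hne => (cdist_conditions_iff ht hne).2 (hs x y hr hne)⟩

/-- The involution and the middle row of a composition both reverse the cyclic order around a
point and flip its normalized color. -/
theorem potential_eq_of_sumBefore_eq {m : ℕ} {p r : TCP} {a : p.Point} {a' : r.Point}
    (hsum : r.sumBefore a' = p.sumBefore a + p.sgn a - p.tsum)
    (hcol : r.ncolor a' = !p.ncolor a) :
    potential m r a' = potential m p a + m - p.tsum := by
  rw [potential, potential, hcol, colorOffset_not_ncolor, hsum]
  push_cast
  ring

def lowerSum (p : TCP) : ℤ := ∑ i, p.sgn (.inr i)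

def upperSum (p : TCP) : ℤ := ∑ j, p.sgn (.inl j)

section Rows

variable (p : TCP)

theorem tsum_eq_upperSum_add_lowerSum : p.tsum = p.upperSum + p.lowerSum := by
  rw [tsum_eq_sum, Fintype.sum_sum_type]
  rfl

theorem pos_inr_lt_lower (i : Fin p.lower) : p.pos (.inr i) < p.lower := i.isLt

theorem lower_le_pos_inl (j : Fin p.upper) : p.lower ≤ p.pos (.inl j) := Nat.le_add_right _ _

theorem lowerSum_eq_sum : p.lowerSum = ∑ z, if p.pos z < p.lower then p.sgn z else 0 := by
  rw [Fintype.sum_sum_type, sum_eq_zero fun j _ => if_neg (p.lower_le_pos_inl j).not_gt,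
    zero_add]
  exact sum_congr rfl fun i _ => (if_pos (p.pos_inr_lt_lower i)).symm

theorem sumBefore_inr (i : Fin p.lower) :
    p.sumBefore (.inr i) = ∑ i' : Fin p.lower, if (i' : ℕ) < i then p.sgn (.inr i') else 0 := by
  rw [sumBefore, Fintype.sum_sum_type]
  refine (congr_arg₂ (· + ·) (sum_eq_zero fun j _ => if_neg ?_) rfl).trans (zero_add _)
  simp only [pos]
  omega

theorem sumBefore_inl (j : Fin p.upper) :
    p.sumBefore (.inl j) =
      p.lowerSum + ∑ j' : Fin p.upper, if (j : ℕ) < j' then p.sgn (.inl j') else 0 := by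
  rw [sumBefore, Fintype.sum_sum_type, add_comm]
  refine congr_arg₂ (· + ·) (sum_congr rfl fun i _ => if_pos ?_)
    (sum_congr rfl fun j' _ => if_congr ?_ rfl rfl) <;> simp only [pos] <;> omega

theorem sumAfter_inl (j : Fin p.upper) :
    p.sumAfter (.inl j) = ∑ j' : Fin p.upper, if (j' : ℕ) < j then p.sgn (.inl j') else 0 := by
  rw [sumAfter, Fintype.sum_sum_type]
  refine (congr_arg₂ (· + ·) (sum_congr rfl fun j' _ => if_congr ?_ rfl rfl)
    (sum_eq_zero fun i _ => if_neg ?_)).trans (add_zero _) <;> simp only [pos] <;> omega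

end Rows

section Tensor

variable {m : ℕ} (p q : TCP)

def tensorEquiv : p.Point ⊕ q.Point ≃ (p.tensor q).Point where
  toFun := Sum.elim (p.tinl q) (p.tinr q)
  invFun := p.ptmap q
  left_inv := by rintro ((j | i) | (j | i)) <;> simp [tinl, tinr, ptmap]
  right_inv := by
    rintro (j | i)
    · induction j using Fin.addCases <;> simp [tinl, tinr, ptmap]
    · induction i using Fin.addCases <;> simp [tinl, tinr, ptmap]

theorem rel_tensorEquiv (z w : p.Point ⊕ q.Point) :
    (p.tensor q).rel.r (tensorEquiv p q z) (tensorEquiv p q w) ↔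
      sumRel p.rel.r q.rel.r z w := by
  change (sumSetoid p.rel q.rel).r ((tensorEquiv p q).symm (tensorEquiv p q z))
    ((tensorEquiv p q).symm (tensorEquiv p q w)) ↔ _
  rw [Equiv.symm_apply_apply, Equiv.symm_apply_apply]
  rfl

theorem ncolor_tinl (x : p.Point) : (p.tensor q).ncolor (p.tinl q x) = p.ncolor x := by
  cases x <;> simp [tinl, ncolor, tensor]

theorem ncolor_tinr (x : q.Point) : (p.tensor q).ncolor (p.tinr q x) = q.ncolor x := by
  cases x <;> simp [tinr, ncolor, tensor]

theorem sgn_tinl (x : p.Point) : (p.tensor q).sgn (p.tinl q x) = p.sgn x := by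
  rw [sgn, sgn, ncolor_tinl]

theorem sgn_tinr (x : q.Point) : (p.tensor q).sgn (p.tinr q x) = q.sgn x := by
  rw [sgn, sgn, ncolor_tinr]

theorem pos_tinl_inr (i : Fin p.lower) :
    (p.tensor q).pos (p.tinl q (.inr i)) = p.pos (.inr i) :=
  rfl

theorem pos_tinl_inl (j : Fin p.upper) :
    (p.tensor q).pos (p.tinl q (.inl j)) = p.pos (.inl j) + q.size := by
  simp only [tinl, pos, size, tensor, Fin.val_castAdd]
  omega

theorem pos_tinr (x : q.Point) : (p.tensor q).pos (p.tinr q x) = p.lower + q.pos x := by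
  rcases x with j | i
  · simp only [tinr, pos, tensor, Fin.val_natAdd]
    omega
  · rfl

theorem sum_tensor (f : (p.tensor q).Point → ℤ) :
    ∑ z, f z = ∑ a, f (p.tinl q a) + ∑ b, f (p.tinr q b) :=
  ((tensorEquiv p q).sum_comp f).symm.trans (Fintype.sum_sum_type _)

theorem tsum_tensor : (p.tensor q).tsum = p.tsum + q.tsum := by
  simp only [tsum_eq_sum, sum_tensor, sgn_tinl, sgn_tinr]

theorem sumBefore_tinl_inr (i : Fin p.lower) :
    (p.tensor q).sumBefore (p.tinl q (.inr i)) = p.sumBefore (.inr i) := by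
  rw [sumBefore, sum_tensor, pos_tinl_inr, sumBefore]
  have hi := p.pos_inr_lt_lower i
  refine (congr_arg₂ (· + ·) (sum_congr rfl fun a _ => ?_)
    (sum_eq_zero fun b _ => if_neg ?_)).trans (add_zero _)
  · rcases a with j | i'
    · have := p.lower_le_pos_inl j
      rw [pos_tinl_inl, if_neg (by omega), if_neg (by omega)]
    · rw [pos_tinl_inr, sgn_tinl]
  · rw [pos_tinr]
    omega

theorem sumBefore_tinl_inl (j : Fin p.upper) :
    (p.tensor q).sumBefore (p.tinl q (.inl j)) = p.sumBefore (.inl j) + q.tsum := by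
  rw [sumBefore, sum_tensor, pos_tinl_inl, sumBefore, tsum_eq_sum]
  have hj := p.lower_le_pos_inl j
  refine congr_arg₂ (· + ·) (sum_congr rfl fun a _ => ?_) (sum_congr rfl fun b _ => ?_)
  · rcases a with j' | i'
    · rw [pos_tinl_inl, sgn_tinl]
      exact if_congr (by omega) rfl rfl
    · have := p.pos_inr_lt_lower i'
      rw [pos_tinl_inr, sgn_tinl, if_pos (by omega), if_pos (by omega)]
  · have := q.pos_lt_size b
    rw [pos_tinr, sgn_tinr, if_pos (by omega)]

theorem sumBefore_tinr (x : q.Point) :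
    (p.tensor q).sumBefore (p.tinr q x) = q.sumBefore x + p.lowerSum := by
  rw [sumBefore, sum_tensor, pos_tinr, sumBefore, lowerSum_eq_sum]
  have hx := q.pos_lt_size x
  refine (add_comm _ _).trans
    (congr_arg₂ (· + ·) (sum_congr rfl fun b _ => ?_) (sum_congr rfl fun a _ => ?_))
  · rw [pos_tinr, sgn_tinr]
    exact if_congr (by omega) rfl rfl
  · rcases a with j | i
    · have := p.lower_le_pos_inl j
      rw [pos_tinl_inl, if_neg (by omega), if_neg (by omega)]
    · have := p.pos_inr_lt_lower i
      rw [pos_tinl_inr, sgn_tinl, if_pos (by omega), if_pos (by omega)]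

theorem potential_tinl (hq : (q.tsum : ZMod (2 * m)) = 0) (x : p.Point) :
    potential m (p.tensor q) (p.tinl q x) = potential m p x := by
  rcases x with j | i
  · rw [potential, potential, ncolor_tinl, sumBefore_tinl_inl]
    push_cast
    rw [hq, add_zero]
  · rw [potential, potential, ncolor_tinl, sumBefore_tinl_inr]

theorem potential_tinr (x : q.Point) :
    potential m (p.tensor q) (p.tinr q x) = potential m q x + p.lowerSum := by
  rw [potential, potential, ncolor_tinr, sumBefore_tinr]
  push_cast
  ring

variable {p q}

theorem AntipodalBlocks.tensor (hp : AntipodalBlocks m p) (hq : AntipodalBlocks m q)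
    (htq : (q.tsum : ZMod (2 * m)) = 0) : AntipodalBlocks m (p.tensor q) := by
  intro x y hxy hne
  obtain ⟨z, rfl⟩ := (tensorEquiv p q).surjective x
  obtain ⟨w, rfl⟩ := (tensorEquiv p q).surjective y
  rw [rel_tensorEquiv] at hxy
  rcases z with a | a <;> rcases w with b | b
  · change potential m _ (p.tinl q b) = potential m _ (p.tinl q a) + m
    rw [potential_tinl p q htq, potential_tinl p q htq]
    exact hp a b hxy fun hab => hne (hab ▸ rfl)
  · exact hxy.elim
  · exact hxy.elim
  · change potential m _ (p.tinr q b) = potential m _ (p.tinr q a) + m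
    rw [potential_tinr, potential_tinr, hq a b hxy fun hab => hne (hab ▸ rfl)]
    ring

end Tensor

section Invol

variable {m : ℕ} (p : TCP)

theorem ncolor_invol (x : p.Point) : p.invol.ncolor x.swap = !p.ncolor x := by
  cases x <;> simp [ncolor, invol]

theorem sgn_invol (x : p.Point) : p.invol.sgn x.swap = -p.sgn x := by
  simp only [sgn, ncolor_invol]
  cases p.ncolor x <;> simp

theorem pos_invol (x : p.Point) : p.invol.pos x.swap = p.size - 1 - p.pos x := by
  rcases x with j | i <;> simp only [Sum.swap_inl, Sum.swap_inr, pos, invol, size] <;> omega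

theorem sum_invol (f : p.invol.Point → ℤ) : ∑ z, f z = ∑ x : p.Point, f x.swap :=
  ((Equiv.sumComm _ _).sum_comp f).symm

theorem tsum_invol : p.invol.tsum = -p.tsum := by
  simp only [tsum_eq_sum, sum_invol, sgn_invol, sum_neg_distrib]

theorem sumBefore_invol (x : p.Point) : p.invol.sumBefore x.swap = -p.sumAfter x := by
  simp only [sumBefore, sumAfter, sum_invol, ← sum_neg_distrib]
  refine sum_congr rfl fun z _ => ?_
  have hx := p.pos_lt_size x
  have hz := p.pos_lt_size z
  rw [pos_invol, pos_invol, sgn_invol]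
  split_ifs <;> omega

theorem potential_invol (x : p.Point) :
    potential m p.invol x.swap = potential m p x + m - p.tsum :=
  potential_eq_of_sumBefore_eq
    (by linear_combination p.sumBefore_invol x - p.sumBefore_add_sgn_add_sumAfter x)
    (p.ncolor_invol x)

theorem rel_invol (x y : p.Point) : p.invol.rel.r x.swap y.swap ↔ p.rel.r x y := by
  change p.rel.r x.swap.swap y.swap.swap ↔ _
  rw [Sum.swap_swap, Sum.swap_swap]

variable {p}

theorem AntipodalBlocks.invol (h : AntipodalBlocks m p) : AntipodalBlocks m p.invol := by
  intro x y hxy hne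
  obtain ⟨a, rfl⟩ : ∃ a : p.Point, a.swap = x := ⟨x.swap, Sum.swap_swap x⟩
  obtain ⟨b, rfl⟩ : ∃ b : p.Point, b.swap = y := ⟨y.swap, Sum.swap_swap y⟩
  rw [potential_invol, potential_invol,
    h a b ((rel_invol p a b).1 hxy) fun hab => hne (hab ▸ rfl)]
  ring

end Invol

section Comp

variable {m : ℕ} {p q : TCP}

theorem ncolor_mid (h : p.Composable q) (j : Fin p.upper) :
    q.ncolor (.inr (Fin.cast h.len j)) = !p.ncolor (.inl j) := by
  simp [ncolor, h.col j]

theorem sgn_mid (h : p.Composable q) (j : Fin p.upper) :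
    q.sgn (.inr (Fin.cast h.len j)) = -p.sgn (.inl j) := by
  simp only [sgn, ncolor_mid h]
  cases p.ncolor (.inl j) <;> simp

theorem sum_lower_eq_sum_upper (h : p.Composable q) (f : Fin q.lower → ℤ) :
    ∑ i, f i = ∑ j : Fin p.upper, f (Fin.cast h.len j) :=
  (Fin.sum_congr' f h.len).symm

theorem lowerSum_eq_neg_upperSum (h : p.Composable q) : q.lowerSum = -p.upperSum := by
  rw [lowerSum, sum_lower_eq_sum_upper h, upperSum, ← sum_neg_distrib]
  exact sum_congr rfl fun j _ => sgn_mid h j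

theorem sumBefore_mid (h : p.Composable q) (j : Fin p.upper) :
    q.sumBefore (.inr (Fin.cast h.len j)) = -p.sumAfter (.inl j) := by
  rw [sumBefore_inr, sumAfter_inl, sum_lower_eq_sum_upper h, ← sum_neg_distrib]
  refine sum_congr rfl fun j' _ => ?_
  simp only [Fin.val_cast, sgn_mid h]
  split_ifs <;> simp

theorem potential_mid (h : p.Composable q) (j : Fin p.upper) :
    potential m q (.inr (Fin.cast h.len j)) = potential m p (.inl j) + m - p.tsum :=
  potential_eq_of_sumBefore_eq
    (by linear_combination sumBefore_mid h j - p.sumBefore_add_sgn_add_sumAfter (.inl j))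
    (ncolor_mid h j)

theorem tsum_comp (h : p.Composable q) : (p.comp q h).tsum = p.tsum + q.tsum := by
  rw [tsum_eq_upperSum_add_lowerSum, tsum_eq_upperSum_add_lowerSum p,
    tsum_eq_upperSum_add_lowerSum q, lowerSum_eq_neg_upperSum h]
  change q.upperSum + p.lowerSum = _
  ring

theorem sumBefore_comp_inr (h : p.Composable q) (i : Fin p.lower) :
    (p.comp q h).sumBefore (.inr i) = p.sumBefore (.inr i) :=
  ((p.comp q h).sumBefore_inr i).trans (p.sumBefore_inr i).symm

theorem sumBefore_comp_inl (h : p.Composable q) (j : Fin q.upper) :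
    (p.comp q h).sumBefore (.inl j) = q.sumBefore (.inl j) + p.tsum :=
  calc (p.comp q h).sumBefore (.inl j)
      = p.lowerSum + ∑ j' : Fin q.upper, if (j : ℕ) < j' then q.sgn (.inl j') else 0 :=
        (p.comp q h).sumBefore_inl j
    _ = q.sumBefore (.inl j) + p.tsum := by
      rw [sumBefore_inl, tsum_eq_upperSum_add_lowerSum p, lowerSum_eq_neg_upperSum h]
      ring

theorem potential_comp_inr (h : p.Composable q) (i : Fin p.lower) :
    potential m (p.comp q h) (.inr i) = potential m p (.inr i) := by
  rw [potential, potential, sumBefore_comp_inr h]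
  rfl

theorem potential_comp_inl (h : p.Composable q) (j : Fin q.upper) :
    potential m (p.comp q h) (.inl j) = potential m q (.inl j) + p.tsum := by
  rw [potential, potential, sumBefore_comp_inl h]
  push_cast
  rw [add_right_comm]
  rfl

/-- Together with `midEdge`, the edges of a graph on the points of `q` and `p` whose connected
components, restricted to the outer points, are the blocks of the composition. -/
def blockEdge (p q : TCP) (v w : q.Point ⊕ p.Point) : Prop :=
  v ≠ w ∧ sumRel q.rel.r p.rel.r v w

def midEdge (hl : p.upper = q.lower) (v w : q.Point ⊕ p.Point) : Prop :=
  (∃ j : Fin p.upper, v = .inl (.inr (Fin.cast hl j)) ∧ w = .inr (.inl j)) ∨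
    ∃ j : Fin p.upper, w = .inl (.inr (Fin.cast hl j)) ∧ v = .inr (.inl j)

instance : Std.Symm (blockEdge p q) where
  symm := by
    rintro (a | a) (b | b) ⟨hne, hr⟩
    exacts [⟨hne.symm, q.rel.symm hr⟩, hr.elim, hr.elim, ⟨hne.symm, p.rel.symm hr⟩]

instance (hl : p.upper = q.lower) : Std.Symm (midEdge hl) := ⟨fun _ _ => Or.symm⟩

instance (hl : p.upper = q.lower) : Std.Symm fun v w => blockEdge p q v w ∨ midEdge hl v w :=
  ⟨fun _ _ => Or.imp (Std.Symm.symm _ _) (Std.Symm.symm _ _)⟩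

theorem blockEdge_rightUnique (hm : 0 < m) (hp : AntipodalBlocks m p)
    (hq : AntipodalBlocks m q) : Relator.RightUnique (blockEdge p q) := by
  rintro (a | a) (b | b) (c | c) ⟨hab, rab⟩ ⟨hac, rac⟩
  all_goals first | exact rab.elim | exact rac.elim | skip
  · exact congrArg _ (hq.eq_of_rel hm rab rac (fun h => hab (h ▸ rfl)) fun h => hac (h ▸ rfl))
  · exact congrArg _ (hp.eq_of_rel hm rab rac (fun h => hab (h ▸ rfl)) fun h => hac (h ▸ rfl))

theorem midEdge_rightUnique (hl : p.upper = q.lower) : Relator.RightUnique (midEdge hl) := by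
  rintro v w w' (⟨j, rfl, rfl⟩ | ⟨j, rfl, rfl⟩) (⟨j', hv, rfl⟩ | ⟨j', rfl, hv⟩) <;>
    simp_all [Fin.cast_inj]

theorem reflTransGen_of_eqvGen_compRel {hl : p.upper = q.lower} {v w : q.Point ⊕ p.Point}
    (hvw : EqvGen (compRel p q hl) v w) :
    ReflTransGen (fun v w => blockEdge p q v w ∨ midEdge hl v w) v w := by
  rw [← EqvGen.eqvGen_eq_reflTransGen, ← EqvGen.eqvGen_reflGen]
  refine EqvGen.eqvGen_mono (fun v w hvw => ?_) _ _ hvw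
  by_cases hne : v = w
  · exact hne ▸ .refl
  · refine .single ?_
    rcases hvw with ⟨a, b, rfl, rfl, hr⟩ | ⟨a, b, rfl, rfl, hr⟩ | hmid | hmid
    exacts [.inl ⟨hne, hr⟩, .inl ⟨hne, hr⟩, .inr (.inl hmid), .inr (.inr hmid)]

def compOuter (h : p.Composable q) : (p.comp q h).Point → q.Point ⊕ p.Point
  | .inl j => .inl (.inl j)
  | .inr i => .inr (.inr i)

theorem rel_comp (h : p.Composable q) (x y : (p.comp q h).Point) :
    (p.comp q h).rel.r x y ↔ EqvGen (compRel p q h.len) (compOuter h x) (compOuter h y) := by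
  rcases x with j | i <;> rcases y with j' | i' <;> exact Iff.rfl

theorem compOuter_injective (h : p.Composable q) : Function.Injective (compOuter h) := by
  rintro (a | a) (b | b) hab <;> cases hab <;> rfl

theorem not_midEdge_compOuter (h : p.Composable q) (x : (p.comp q h).Point)
    (w : q.Point ⊕ p.Point) : ¬midEdge h.len (compOuter h x) w := by
  rcases x with j | i <;> rintro (⟨k, hk, -⟩ | ⟨k, -, hk⟩) <;> simp [compOuter] at hk

theorem potential_comp (h : p.Composable q) (htp : (p.tsum : ZMod (2 * m)) = 0)
    (x : (p.comp q h).Point) :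
    potential m (p.comp q h) x = Sum.elim (potential m q) (potential m p) (compOuter h x) := by
  rcases x with j | i
  · exact (potential_comp_inl h j).trans (by rw [htp, add_zero]; rfl)
  · exact potential_comp_inr h i

theorem AntipodalBlocks.comp (h : p.Composable q) (hm : 0 < m) (hp : AntipodalBlocks m p)
    (hq : AntipodalBlocks m q) (htp : (p.tsum : ZMod (2 * m)) = 0) :
    AntipodalBlocks m (p.comp q h) := by
  intro x y hxy hne
  have hmid (j : Fin p.upper) :
      potential m q (.inr (Fin.cast h.len j)) = potential m p (.inl j) + m := by
    rw [potential_mid h j, htp, sub_zero]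
  rw [potential_comp h htp, potential_comp h htp]
  refine apply_eq_add_of_reflTransGen_or (blockEdge_rightUnique hm hp hq)
    (midEdge_rightUnique h.len) ZMod.natCast_add_self_eq_zero ?_ (not_midEdge_compOuter h x)
    (not_midEdge_compOuter h y) ((compOuter_injective h).ne hne)
    (reflTransGen_of_eqvGen_compRel ((rel_comp h x y).1 hxy))
  rintro v w ((⟨hvw, hr⟩ : blockEdge p q v w) | (⟨j, rfl, rfl⟩ | ⟨j, rfl, rfl⟩))
  · rcases v with a | a <;> rcases w with b | b
    exacts [hq a b hr fun hab => hvw (hab ▸ rfl), hr.elim, hr.elim,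
      hp a b hr fun hab => hvw (hab ▸ rfl)]
  · exact ZMod.eq_add_of_eq_add_natCast (hmid j)
  · exact hmid j

end Comp

theorem AntipodalBlocks.of_pair {m : ℕ} {p : TCP} {a b : p.Point}
    (hpair : ∀ x y : p.Point, x ≠ y → (x = a ∧ y = b) ∨ (x = b ∧ y = a))
    (hab : potential m p b = potential m p a + m) : AntipodalBlocks m p := by
  intro x y _ hne
  rcases hpair x y hne with ⟨rfl, rfl⟩ | ⟨rfl, rfl⟩
  exacts [hab, ZMod.eq_add_of_eq_add_natCast hab]

variable {m : ℕ}

theorem emptyP_mem_antipodalSet : emptyP ∈ antipodalSet m := by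
  have ht : emptyP.tsum = 0 := by decide
  exact ⟨by rw [ht, Int.cast_zero], fun x => x.elim Fin.elim0 Fin.elim0⟩

theorem idPart_mem_antipodalSet (c : Bool) : idPart c ∈ antipodalSet m := by
  have ht : (idPart c).tsum = 0 := by cases c <;> decide
  refine ⟨by rw [ht, Int.cast_zero],
    AntipodalBlocks.of_pair (a := .inr (0 : Fin 1)) (b := .inl (0 : Fin 1)) ?_ ?_⟩
  · cases c <;> decide
  · rw [potential_eq_of_sumBefore_eq (p := idPart c) (a := .inr (0 : Fin 1))
      (by cases c <;> decide) rfl, ht, Int.cast_zero, sub_zero]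

theorem lpair_mem_antipodalSet (c : Bool) : lpair c (!c) ∈ antipodalSet m := by
  have ht : (lpair c (!c)).tsum = 0 := by cases c <;> decide
  refine ⟨by rw [ht, Int.cast_zero],
    AntipodalBlocks.of_pair (a := .inr (0 : Fin 2)) (b := .inr (1 : Fin 2)) ?_ ?_⟩
  · cases c <;> decide
  · rw [potential_eq_of_sumBefore_eq (p := lpair c (!c)) (a := .inr (0 : Fin 2))
      (by cases c <;> decide) rfl, ht, Int.cast_zero, sub_zero]

theorem isCategory_antipodalSet (hm : 0 < m) : IsCategory (antipodalSet m) := by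
  refine ⟨emptyP_mem_antipodalSet, idPart_mem_antipodalSet true, idPart_mem_antipodalSet false,
    lpair_mem_antipodalSet true, lpair_mem_antipodalSet false, ?_, ?_, ?_⟩
  · rintro p q ⟨htp, hp⟩ ⟨htq, hq⟩
    exact ⟨by rw [tsum_tensor, Int.cast_add, htp, htq, add_zero], hp.tensor hq htq⟩
  · rintro p ⟨htp, hp⟩
    exact ⟨by rw [tsum_invol, Int.cast_neg, htp, neg_zero], hp.invol⟩
  · rintro p q h ⟨htp, hp⟩ ⟨htq, hq⟩
    exact ⟨by rw [tsum_comp, Int.cast_add, htp, htq, add_zero], hp.comp h hm hq htp⟩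

end TCP

/-- for m ≥ 1, the partitions with blocks of at most two legs, total
color sum in 2mℤ, and same-block distances odd/even multiples of m according to the
normalized colors, form a category. -/
theorem stmt15 (m : ℕ) (hm : 0 < m) :
    TCP.IsCategory {p : TCP |
      (∀ B : Finset p.Point, p.IsBlock B → B.card ≤ 2) ∧
      ((2 * m : ℤ) ∣ p.tsum) ∧
      (∀ B : Finset p.Point, p.IsBlock B → ∀ a ∈ B, ∀ b ∈ B, a ≠ b →
        ((p.ncolor a = p.ncolor b → (2 * m : ℤ) ∣ (p.cdist a b - m)) ∧
         (p.ncolor a ≠ p.ncolor b → (2 * m : ℤ) ∣ p.cdist a b)))} := by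
  rw [TCP.setOf_eq_antipodalSet hm]
  exact TCP.isCategory_antipodalSet hm
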